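/- arXiv:1307.7749 — 5 statements merged into one kernel-verified Lean document; each statement's English description precedes it below -/
import Mathlib

section
/- For a finite simple graph G, the multiplicity of 0 as an eigenvalue of the signless Laplacian Q(G) equals the number of bipartite connected components of G. -/
open Matrix SimpleGraph

/-!
Writing `N` for the unsigned vertex-edge incidence matrix, `Q(G) = N Nᵀ`, so over `ℝ` the kernel of
`Q(G)` is that of `Nᵀ`: the vectors `x` with `x u = -x v` along every edge. For such `x` and the
`±1`-vector `s` of a proper 2-colouring, `x * s` is constant on components; and if `x` does not
vanish on a component, the sign of `x` is a proper 2-colouring of it. Hence `x` is zero on every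
non-bipartite component and a multiple of `s` on each bipartite one.
-/

/-- The signless Laplacian matrix `Q(G) = D(G) + A(G)` of a simple graph. -/
def signlessLap {V : Type*} [Fintype V] [DecidableEq V] (G : SimpleGraph V)
    [DecidableRel G.Adj] : Matrix V V ℝ :=
  G.degMatrix ℝ + G.adjMatrix ℝ

namespace SimpleGraph

variable {V : Type*} {G : SimpleGraph V}

theorem Reachable.apply_eq_of_forall_adj {α : Type*} {f : V → α}
    (hf : ∀ u v, G.Adj u v → f u = f v) {u v : V} (h : G.Reachable u v) : f u = f v := by
  obtain ⟨p⟩ := h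
  induction p with
  | nil => rfl
  | cons hadj _ ih => exact (hf _ _ hadj).trans ih

theorem Reachable.mul_eq_mul_of_forall_adj_eq_neg {R : Type*} [Ring R] {x y : V → R}
    (hx : ∀ u v, G.Adj u v → x u = -x v) (hy : ∀ u v, G.Adj u v → y u = -y v) {u v : V}
    (h : G.Reachable u v) : x u * y u = x v * y v :=
  h.apply_eq_of_forall_adj (f := x * y) fun a b hab => by
    simp only [Pi.mul_apply, hx a b hab, hy a b hab, neg_mul_neg]

theorem colorable_two_of_forall_adj_eq_neg {R : Type*} [Ring R] [LinearOrder R]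
    [IsStrictOrderedRing R] {x : V → R} (hx : ∀ u v, G.Adj u v → x u = -x v)
    (h0 : ∀ v, x v ≠ 0) : G.Colorable 2 := by
  refine (Coloring.mk (fun v => decide (0 < x v)) fun {u v} huv => ?_).colorable
  rw [hx u v huv]
  rcases (h0 v).lt_or_gt with hv | hv <;> simp [hv, hv.le]

theorem ConnectedComponent.colorable_two_of_forall_adj_eq_neg {R : Type*} [Ring R]
    [LinearOrder R] [IsStrictOrderedRing R] {x : V → R} (hx : ∀ u v, G.Adj u v → x u = -x v)
    {c : G.ConnectedComponent} {v : V} (hv : v ∈ c.supp) (h0 : x v ≠ 0) :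
    (G.induce c.supp).Colorable 2 := by
  refine SimpleGraph.colorable_two_of_forall_adj_eq_neg (x := fun w => x w)
    (fun a b hab => hx a b hab) fun ⟨w, hw⟩ hw0 => h0 ?_
  have hr : G.Reachable w v := ConnectedComponent.exact (hw.trans hv.symm)
  have hsq := hr.mul_eq_mul_of_forall_adj_eq_neg hx hx
  rwa [hw0, mul_zero, eq_comm, mul_self_eq_zero] at hsq

namespace ConnectedComponent

variable (c : G.ConnectedComponent)

open Classical in
noncomputable def sign (v : V) : ℝ :=
  if h : v ∈ c.supp ∧ (G.induce c.supp).Colorable 2 then (-1) ^ (h.2.some ⟨v, h.1⟩ : ℕ) else 0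

theorem sign_eq_neg_of_adj {u v : V} (h : G.Adj u v) : c.sign u = -c.sign v := by
  have hmem := c.mem_supp_congr_adj h
  by_cases hv : v ∈ c.supp
  · by_cases hc : (G.induce c.supp).Colorable 2
    · have hne : hc.some ⟨u, hmem.mpr hv⟩ ≠ hc.some ⟨v, hv⟩ := hc.some.valid h
      rw [sign, sign, dif_pos ⟨hmem.mpr hv, hc⟩, dif_pos ⟨hv, hc⟩]
      generalize hc.some ⟨u, hmem.mpr hv⟩ = a, hc.some ⟨v, hv⟩ = b at hne
      fin_cases a <;> fin_cases b <;> simp_all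
    · simp [sign, hc]
  · simp [sign, hv, hmem]

theorem sign_mul_self {v : V} (hv : v ∈ c.supp) (hc : (G.induce c.supp).Colorable 2) :
    c.sign v * c.sign v = 1 := by
  simp [sign, hv, hc, ← mul_pow]

end ConnectedComponent

section SignlessLaplacian

variable {R : Type*} [Fintype V] [DecidableEq V] [DecidableRel G.Adj]

theorem incMatrix_transpose_mulVec_apply_mk [NonAssocSemiring R] {u v : V} (h : G.Adj u v)
    (x : V → R) : ((G.incMatrix R)ᵀ *ᵥ x) s(u, v) = x u + x v := by
  simp only [mulVec, dotProduct, transpose_apply, incMatrix_apply', mk'_mem_incidenceSet_iff,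
    h, true_and, ite_mul, one_mul, zero_mul]
  rw [← Finset.sum_filter, Finset.filter_or, Finset.filter_eq', Finset.filter_eq',
    if_pos (Finset.mem_univ _), if_pos (Finset.mem_univ _)]
  exact Finset.sum_pair h.ne

theorem incMatrix_transpose_mulVec_apply_of_notMem_edgeSet [NonAssocSemiring R] {e : Sym2 V}
    (he : e ∉ G.edgeSet) (x : V → R) : ((G.incMatrix R)ᵀ *ᵥ x) e = 0 :=
  Finset.sum_eq_zero fun _ _ =>
    mul_eq_zero_of_left (G.incMatrix_of_notMem_incidenceSet fun h => he h.1) _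

theorem incMatrix_transpose_mulVec_eq_zero_iff [NonAssocRing R] (x : V → R) :
    (G.incMatrix R)ᵀ *ᵥ x = 0 ↔ ∀ u v, G.Adj u v → x u = -x v := by
  refine ⟨fun h u v huv => ?_, fun h => funext fun e => ?_⟩
  · rw [← add_eq_zero_iff_eq_neg, ← incMatrix_transpose_mulVec_apply_mk huv, h, Pi.zero_apply]
  · induction e with
    | h u v =>
      by_cases huv : G.Adj u v
      · rw [incMatrix_transpose_mulVec_apply_mk huv, h u v huv, neg_add_cancel, Pi.zero_apply]
      · exact incMatrix_transpose_mulVec_apply_of_notMem_edgeSet huv x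

theorem signlessLap_eq_incMatrix_mul_transpose :
    signlessLap G = G.incMatrix ℝ * (G.incMatrix ℝ)ᵀ := by
  rw [incMatrix_mul_transpose]
  ext u v
  rcases eq_or_ne u v with rfl | huv
  · simp [signlessLap, degMatrix]
  · simp [signlessLap, degMatrix, huv]

theorem mem_ker_signlessLap_iff (x : V → ℝ) :
    x ∈ LinearMap.ker (toLin' (signlessLap G)) ↔ ∀ u v, G.Adj u v → x u = -x v := by
  have hker := ker_mulVecLin_transpose_mul_self (G.incMatrix ℝ)ᵀ
  rw [transpose_transpose] at hker
  rw [← incMatrix_transpose_mulVec_eq_zero_iff, signlessLap_eq_incMatrix_mul_transpose,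
    toLin'_apply', hker, LinearMap.mem_ker, mulVecLin_apply]

variable (G) in
open Classical in
noncomputable def kerSignlessLapEquiv :
    LinearMap.ker (toLin' (signlessLap G)) ≃ₗ[ℝ]
      ({c : G.ConnectedComponent // (G.induce c.supp).Colorable 2} → ℝ) where
  toFun x b := x.1 b.1.out * b.1.sign b.1.out
  map_add' x y := funext fun b => add_mul _ _ _
  map_smul' r x := funext fun b => mul_assoc _ _ _
  invFun f := ⟨fun v => (if h : (G.induce (G.connectedComponentMk v).supp).Colorable 2 then
      f ⟨_, h⟩ else 0) * (G.connectedComponentMk v).sign v,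
    (mem_ker_signlessLap_iff _).mpr fun u v h => by
      rw [ConnectedComponent.connectedComponentMk_eq_of_adj h,
        ConnectedComponent.sign_eq_neg_of_adj _ h, mul_neg]⟩
  left_inv x := by
    have hx := (mem_ker_signlessLap_iff x.1).mp x.2
    refine Subtype.ext (funext fun v => ?_)
    dsimp only
    set c := G.connectedComponentMk v
    by_cases hc : (G.induce c.supp).Colorable 2
    · have hr : G.Reachable c.out v := ConnectedComponent.exact c.out_eq
      rw [dif_pos hc, hr.mul_eq_mul_of_forall_adj_eq_neg hx fun _ _ => c.sign_eq_neg_of_adj,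
        mul_assoc, c.sign_mul_self rfl hc, mul_one]
    · rw [dif_neg hc, zero_mul]
      by_contra h0
      exact hc (ConnectedComponent.colorable_two_of_forall_adj_eq_neg hx rfl (Ne.symm h0))
  right_inv f := funext fun b => by
    have hb : G.connectedComponentMk b.1.out = b.1 := b.1.out_eq
    dsimp only
    rw [hb, dif_pos b.2, mul_assoc, b.1.sign_mul_self b.1.out_eq b.2, mul_one]

end SignlessLaplacian

end SimpleGraph

/-- The multiplicity of `0` as an eigenvalue of `Q(G)` (i.e. the dimension of the kernel
of `Q(G)`, since `Q(G)` is symmetric) equals the number of bipartite connected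
components of `G`. -/
theorem stmt1 {V : Type*} [Fintype V] [DecidableEq V] (G : SimpleGraph V)
    [DecidableRel G.Adj] :
    Module.finrank ℝ (LinearMap.ker (Matrix.toLin' (signlessLap G))) =
      Nat.card {c : G.ConnectedComponent // (G.induce c.supp).Colorable 2} := by
  classical
  rw [(kerSignlessLapEquiv G).finrank_eq, Module.finrank_fintype_fun_eq_card,
    Nat.card_eq_fintype_card]
end

section
/- If G is a graph with minimum degree δ(G) > 0, then the smallest eigenvalue μ(G) of the signless Laplacian Q(G) satisfies μ(G) < δ(G). -/
/-! Since `μ` is at most every eigenvalue of the symmetric matrix `Q`, the matrix `Q - μ I` is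
positive semidefinite, i.e. `μ ‖y‖² ≤ yᵀ Q y` for every `y`. Take a vertex `v` of minimum degree
`δ`, a neighbour `u` of it and `y = e_v - c e_u` with `c = 1 / deg u`: then `‖y‖² = 1 + c²` and
`yᵀ Q y = δ - 2c + c² deg u = δ - c`, so `μ (1 + c²) ≤ δ - c < δ (1 + c²)`. -/

open Matrix SimpleGraph

namespace Matrix

variable {n : Type*} [Fintype n] [DecidableEq n]

theorem IsHermitian.posSemidef_sub_smul_one {A : Matrix n n ℝ} (hA : A.IsHermitian) {μ : ℝ}
    (hμ : ∀ (ν : ℝ) (x : n → ℝ), x ≠ 0 → A *ᵥ x = ν • x → μ ≤ ν) :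
    (A - μ • 1).PosSemidef := by
  have hM : (A - μ • 1).IsHermitian := hA.sub (by simp [IsHermitian])
  refine hM.posSemidef_iff_eigenvalues_nonneg.mpr fun i => show 0 ≤ hM.eigenvalues i from ?_
  set x : n → ℝ := ⇑(hM.eigenvectorBasis i)
  have hx : x ≠ 0 := fun h =>
    hM.eigenvectorBasis.orthonormal.ne_zero i (by ext j; exact congrFun h j)
  have hAx : A *ᵥ x = (hM.eigenvalues i + μ) • x := by
    have := hM.mulVec_eigenvectorBasis i
    rw [sub_mulVec, smul_mulVec, one_mulVec] at this
    rw [add_smul, ← this, sub_add_cancel]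
  linarith [hμ _ x hx hAx]

theorem PosSemidef.mul_dotProduct_self_le {A : Matrix n n ℝ} {μ : ℝ} (h : (A - μ • 1).PosSemidef)
    (x : n → ℝ) : μ * (x ⬝ᵥ x) ≤ x ⬝ᵥ (A *ᵥ x) := by
  have := h.dotProduct_mulVec_nonneg x
  rw [sub_mulVec, smul_mulVec, one_mulVec, dotProduct_sub, dotProduct_smul, smul_eq_mul] at this
  simpa using this

theorem single_sub_smul_single_dotProduct_mulVec {R : Type*} [CommRing R] (A : Matrix n n R)
    (u v : n) (c : R) :
    (Pi.single v 1 - c • Pi.single u 1) ⬝ᵥ (A *ᵥ (Pi.single v 1 - c • Pi.single u 1)) =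
      A v v - c * (A v u + A u v) + c ^ 2 * A u u := by
  simp only [mulVec_sub, mulVec_smul, mulVec_single_one, dotProduct_sub, sub_dotProduct,
    dotProduct_smul, smul_dotProduct, single_one_dotProduct, col_apply, smul_eq_mul]
  ring

end Matrix

namespace SimpleGraph

variable {V : Type*} [Fintype V] [DecidableEq V] (G : SimpleGraph V) [DecidableRel G.Adj]

theorem isHermitian_signlessLap : (signlessLap G).IsHermitian :=
  (G.isHermitian_degMatrix ℝ).add (G.isHermitian_adjMatrix ℝ)

theorem signlessLap_apply_self (v : V) : signlessLap G v v = G.degree v := by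
  simp [signlessLap, degMatrix]

variable {G} in
theorem signlessLap_apply_of_adj {u v : V} (h : G.Adj u v) : signlessLap G u v = 1 := by
  simp [signlessLap, degMatrix, h.ne, h]

end SimpleGraph

theorem stmt5_general {V : Type*} [Fintype V] [DecidableEq V] (G : SimpleGraph V)
    [DecidableRel G.Adj] (hδ : 0 < G.minDegree)
    (μ : ℝ)
    (hmin : ∀ (ν : ℝ) (x : V → ℝ), x ≠ 0 → signlessLap G *ᵥ x = ν • x → μ ≤ ν) :
    μ < G.minDegree := by
  have : Nonempty V := not_isEmpty_iff.mp fun _ => hδ.ne' G.minDegree_of_subsingleton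
  obtain ⟨v, hv⟩ := G.exists_minimal_degree_vertex
  obtain ⟨u, hvu⟩ := (G.degree_pos_iff_exists_adj v).mp (hv ▸ hδ)
  have hd : (0 : ℝ) < G.degree u := by
    exact_mod_cast (G.degree_pos_iff_exists_adj u).mpr ⟨v, hvu.symm⟩
  obtain ⟨c, hc0, hcd⟩ : ∃ c : ℝ, 0 < c ∧ c * G.degree u = 1 :=
    ⟨_, inv_pos.mpr hd, inv_mul_cancel₀ hd.ne'⟩
  have hyy := single_sub_smul_single_dotProduct_mulVec 1 u v c
  have hyQy := single_sub_smul_single_dotProduct_mulVec (signlessLap G) u v c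
  rw [one_mulVec] at hyy
  rw [signlessLap_apply_self, signlessLap_apply_self, signlessLap_apply_of_adj hvu,
    signlessLap_apply_of_adj hvu.symm, ← hv] at hyQy
  have hray := ((isHermitian_signlessLap G).posSemidef_sub_smul_one hmin).mul_dotProduct_self_le
    (Pi.single v 1 - c • Pi.single u 1)
  rw [hyy, hyQy] at hray
  simp only [one_apply_eq, one_apply_ne hvu.ne, one_apply_ne hvu.ne.symm] at hray
  nlinarith

/-- If `δ(G) > 0`, then the smallest signless Laplacian eigenvalue `μ(G)` satisfies
`μ(G) < δ(G)`. -/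
theorem stmt5 {V : Type*} [Fintype V] [DecidableEq V] [Nonempty V] (G : SimpleGraph V)
    [DecidableRel G.Adj] (hδ : 0 < G.minDegree)
    (μ : ℝ)
    (hμ : ∃ x : V → ℝ, x ≠ 0 ∧ signlessLap G *ᵥ x = μ • x)
    (hmin : ∀ (ν : ℝ) (x : V → ℝ), x ≠ 0 → signlessLap G *ᵥ x = ν • x → μ ≤ ν) :
    μ < G.minDegree :=
  stmt5_general G hδ μ hmin
end

section
/- Let A, B be Hermitian n × n matrices with eigenvalues in nondecreasing order. Then λ_k(A+B) ≤ λ_k(A) + λ_n(B) for each k, with equality if and only if there exists a nonzero common eigenvector x of A, B, and A+B with eigenvalues λ_k(A), λ_n(B), and λ_k(A+B) respectively. -/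
open Matrix

noncomputable def sortedEigenvalues {n : ℕ} {A : Matrix (Fin n) (Fin n) ℂ}
    (hA : A.IsHermitian) : Fin n → ℝ :=
  hA.eigenvalues ∘ Tuple.sort hA.eigenvalues

/-!
Choose `x ≠ 0` orthogonal to the eigenvectors of `A` with index above `k` and to those of `A + B`
with index below `k`: these are only `n - 1` linear conditions. Expanding `⟪x, M x⟫` in a sorted
eigenbasis, the quadratic form of `A` at `x` is at most `λ_k(A) ‖x‖²`, that of `B` at most
`λ_n(B) ‖x‖²`, and that of `A + B` at least `λ_k(A+B) ‖x‖²`; the first two add up to the third.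
In the equality case both upper bounds are attained, which forces `x` to have no component along
eigenvectors of other eigenvalues, i.e. to be an eigenvector of `A` and of `B`.
-/

open Module
open scoped InnerProductSpace

section WeightedSum

variable {ι : Type*} [Fintype ι] {w μ : ι → ℝ} {c : ℝ}

theorem Finset.sum_mul_le_mul_sum_of_eq_zero (hw : ∀ i, 0 ≤ w i) (h : ∀ i, c < μ i → w i = 0) :
    ∑ i, μ i * w i ≤ c * ∑ i, w i := by
  rw [Finset.mul_sum]
  refine Finset.sum_le_sum fun i _ => ?_
  rcases le_or_gt (μ i) c with hμ | hμ
  · exact mul_le_mul_of_nonneg_right hμ (hw i)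
  · simp [h i hμ]

theorem Finset.mul_sum_le_sum_mul_of_eq_zero (hw : ∀ i, 0 ≤ w i) (h : ∀ i, μ i < c → w i = 0) :
    c * ∑ i, w i ≤ ∑ i, μ i * w i := by
  rw [Finset.mul_sum]
  refine Finset.sum_le_sum fun i _ => ?_
  rcases le_or_gt c (μ i) with hμ | hμ
  · exact mul_le_mul_of_nonneg_right hμ (hw i)
  · simp [h i hμ]

theorem Finset.eq_of_sum_mul_eq_mul_sum (hw : ∀ i, 0 ≤ w i) (h : ∀ i, c < μ i → w i = 0)
    (heq : ∑ i, μ i * w i = c * ∑ i, w i) (i : ι) (hi : w i ≠ 0) : μ i = c := by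
  have hterms : ∀ j ∈ Finset.univ, 0 ≤ (c - μ j) * w j := fun j _ => by
    rcases le_or_gt (μ j) c with hμ | hμ
    · exact mul_nonneg (sub_nonneg.mpr hμ) (hw j)
    · simp [h j hμ]
  have hsum : ∑ j, (c - μ j) * w j = 0 := by
    simp only [sub_mul, Finset.sum_sub_distrib, ← Finset.mul_sum, heq, sub_self]
  have := (Finset.sum_eq_zero_iff_of_nonneg hterms).mp hsum i (Finset.mem_univ i)
  rcases mul_eq_zero.mp this with hc | hc
  · linarith
  · exact absurd hc hi

end WeightedSum

section Rayleigh

variable {𝕜 E ι : Type*} [RCLike 𝕜] [NormedAddCommGroup E] [InnerProductSpace 𝕜 E] [Fintype ι]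
  {T : E →ₗ[𝕜] E} {b : OrthonormalBasis ι 𝕜 E} {μ : ι → ℝ}

theorem OrthonormalBasis.inner_map_of_apply_eq_smul (hT : ∀ i, T (b i) = (μ i : 𝕜) • b i)
    (x : E) (i : ι) : ⟪b i, T x⟫_𝕜 = μ i * ⟪b i, x⟫_𝕜 := by
  conv_lhs => rw [← b.sum_repr' x]
  simp only [map_sum, map_smul, hT, smul_smul]
  rw [b.orthonormal.inner_right_fintype, mul_comm]

theorem OrthonormalBasis.re_inner_map_self_of_apply_eq_smul
    (hT : ∀ i, T (b i) = (μ i : 𝕜) • b i) (x : E) :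
    RCLike.re ⟪x, T x⟫_𝕜 = ∑ i, μ i * ‖⟪b i, x⟫_𝕜‖ ^ 2 := by
  rw [← b.sum_inner_mul_inner x (T x), map_sum]
  refine Finset.sum_congr rfl fun i _ => ?_
  rw [b.inner_map_of_apply_eq_smul hT, ← inner_conj_symm x (b i), mul_left_comm,
    RCLike.conj_mul]
  norm_cast

variable {c : ℝ} {x : E}

theorem OrthonormalBasis.re_inner_map_self_le (hT : ∀ i, T (b i) = (μ i : 𝕜) • b i)
    (hx : ∀ i, c < μ i → ⟪b i, x⟫_𝕜 = 0) : RCLike.re ⟪x, T x⟫_𝕜 ≤ c * ‖x‖ ^ 2 := by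
  rw [b.re_inner_map_self_of_apply_eq_smul hT, ← b.sum_sq_norm_inner_right]
  exact Finset.sum_mul_le_mul_sum_of_eq_zero (fun _ => by positivity)
    fun i hi => by simp [hx i hi]

theorem OrthonormalBasis.le_re_inner_map_self (hT : ∀ i, T (b i) = (μ i : 𝕜) • b i)
    (hx : ∀ i, μ i < c → ⟪b i, x⟫_𝕜 = 0) : c * ‖x‖ ^ 2 ≤ RCLike.re ⟪x, T x⟫_𝕜 := by
  rw [b.re_inner_map_self_of_apply_eq_smul hT, ← b.sum_sq_norm_inner_right]
  exact Finset.mul_sum_le_sum_mul_of_eq_zero (fun _ => by positivity)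
    fun i hi => by simp [hx i hi]

theorem OrthonormalBasis.apply_eq_smul_of_re_inner_map_self_eq
    (hT : ∀ i, T (b i) = (μ i : 𝕜) • b i) (hx : ∀ i, c < μ i → ⟪b i, x⟫_𝕜 = 0)
    (heq : RCLike.re ⟪x, T x⟫_𝕜 = c * ‖x‖ ^ 2) : T x = (c : 𝕜) • x := by
  rw [b.re_inner_map_self_of_apply_eq_smul hT, ← b.sum_sq_norm_inner_right] at heq
  have hμ := Finset.eq_of_sum_mul_eq_mul_sum (fun _ => by positivity)
    (fun i hi => by simp [hx i hi]) heq
  refine InnerProductSpace.ext_inner_left_basis b.toBasis fun i => ?_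
  rw [b.coe_toBasis, b.inner_map_of_apply_eq_smul hT, inner_smul_right]
  by_cases hi : ⟪b i, x⟫_𝕜 = 0
  · simp [hi]
  · rw [hμ i (by simpa using hi)]

theorem exists_ne_zero_forall_inner_eq_zero [FiniteDimensional 𝕜 E] {J : Type*} [Fintype J]
    (v : J → E) (hJ : Fintype.card J < finrank 𝕜 E) : ∃ x ≠ 0, ∀ j, ⟪v j, x⟫_𝕜 = 0 := by
  have hspan : Submodule.span 𝕜 (Set.range v) ≠ ⊤ := fun h => by
    have := finrank_range_le_card (R := 𝕜) v
    rw [Set.finrank, h, finrank_top] at this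
    omega
  obtain ⟨x, hxK, hx0⟩ := (Submodule.ne_bot_iff _).mp
    (mt Submodule.orthogonal_eq_bot_iff.mp hspan)
  exact ⟨x, hx0, fun j =>
    Submodule.inner_right_of_mem_orthogonal (Submodule.subset_span (Set.mem_range_self j)) hxK⟩

theorem exists_ne_zero_inner_eq_zero_of_gt_of_lt [FiniteDimensional 𝕜 E] [LinearOrder ι]
    (hE : finrank 𝕜 E = Fintype.card ι) (u v : ι → E) (k : ι) :
    ∃ x ≠ 0, (∀ i, k < i → ⟪u i, x⟫_𝕜 = 0) ∧ ∀ i, i < k → ⟪v i, x⟫_𝕜 = 0 := by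
  have hcard : Fintype.card {i // i ≠ k} < finrank 𝕜 E := by
    rw [Fintype.card_subtype_compl, Fintype.card_subtype_eq, hE]
    exact Nat.sub_lt (Fintype.card_pos_iff.mpr ⟨k⟩) one_pos
  obtain ⟨x, hx0, hx⟩ := exists_ne_zero_forall_inner_eq_zero
    (fun i : {i // i ≠ k} => if k < i.1 then u i else v i) hcard
  refine ⟨x, hx0, fun i hi => ?_, fun i hi => ?_⟩
  · simpa [hi] using hx ⟨i, hi.ne'⟩
  · simpa [hi.not_gt] using hx ⟨i, hi.ne⟩

end Rayleigh

namespace Matrix.IsHermitian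

variable {n : ℕ} {M : Matrix (Fin n) (Fin n) ℂ} (hM : M.IsHermitian)

noncomputable def sortedEigenvectorBasis : OrthonormalBasis (Fin n) ℂ (EuclideanSpace ℂ (Fin n)) :=
  hM.eigenvectorBasis.reindex (Tuple.sort hM.eigenvalues).symm

theorem toEuclideanLin_sortedEigenvectorBasis (i : Fin n) :
    toEuclideanLin M (hM.sortedEigenvectorBasis i) =
      (sortedEigenvalues hM i : ℂ) • hM.sortedEigenvectorBasis i := by
  ext1
  simp [sortedEigenvectorBasis, sortedEigenvalues, toLpLin_apply, hM.mulVec_eigenvectorBasis]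

theorem monotone_sortedEigenvalues : Monotone (sortedEigenvalues hM) :=
  Tuple.monotone_sort hM.eigenvalues

variable {x : EuclideanSpace ℂ (Fin n)} {k : Fin n}

theorem re_inner_toEuclideanLin_le (hx : ∀ i, k < i → ⟪hM.sortedEigenvectorBasis i, x⟫_ℂ = 0) :
    RCLike.re ⟪x, toEuclideanLin M x⟫_ℂ ≤ sortedEigenvalues hM k * ‖x‖ ^ 2 :=
  hM.sortedEigenvectorBasis.re_inner_map_self_le hM.toEuclideanLin_sortedEigenvectorBasis
    fun i hi => hx i (hM.monotone_sortedEigenvalues.reflect_lt hi)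

theorem le_re_inner_toEuclideanLin (hx : ∀ i, i < k → ⟪hM.sortedEigenvectorBasis i, x⟫_ℂ = 0) :
    sortedEigenvalues hM k * ‖x‖ ^ 2 ≤ RCLike.re ⟪x, toEuclideanLin M x⟫_ℂ :=
  hM.sortedEigenvectorBasis.le_re_inner_map_self hM.toEuclideanLin_sortedEigenvectorBasis
    fun i hi => hx i (hM.monotone_sortedEigenvalues.reflect_lt hi)

theorem mulVec_eq_smul_of_re_inner_toEuclideanLin_eq
    (hx : ∀ i, k < i → ⟪hM.sortedEigenvectorBasis i, x⟫_ℂ = 0)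
    (heq : RCLike.re ⟪x, toEuclideanLin M x⟫_ℂ = sortedEigenvalues hM k * ‖x‖ ^ 2) :
    M *ᵥ x.ofLp = (sortedEigenvalues hM k : ℂ) • x.ofLp :=
  congrArg WithLp.ofLp <| hM.sortedEigenvectorBasis.apply_eq_smul_of_re_inner_map_self_eq
    hM.toEuclideanLin_sortedEigenvectorBasis
    (fun i hi => hx i (hM.monotone_sortedEigenvalues.reflect_lt hi)) heq

end Matrix.IsHermitian

theorem Matrix.eq_add_of_mulVec_eq_smul {𝕜 ι : Type*} [Field 𝕜] [Fintype ι]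
    {A B : Matrix ι ι 𝕜} {x : ι → 𝕜} {a b c : 𝕜} (hx : x ≠ 0) (hA : A *ᵥ x = a • x)
    (hB : B *ᵥ x = b • x) (hAB : (A + B) *ᵥ x = c • x) : c = a + b := by
  rw [add_mulVec, hA, hB, ← add_smul] at hAB
  exact (smul_left_injective 𝕜 hx hAB).symm

/-- Weyl's inequality `λ_k(A+B) ≤ λ_k(A) + λ_n(B)` for Hermitian `A`, `B`, together with
So's equality condition: equality holds iff there is a nonzero common eigenvector of
`A`, `B` and `A + B` with eigenvalues `λ_k(A)`, `λ_n(B)` and `λ_k(A+B)` respectively. -/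
theorem stmt9 {n : ℕ} (hn : 0 < n) (A B : Matrix (Fin n) (Fin n) ℂ)
    (hA : A.IsHermitian) (hB : B.IsHermitian) (hAB : (A + B).IsHermitian)
    (k : Fin n) :
    sortedEigenvalues hAB k ≤ sortedEigenvalues hA k + sortedEigenvalues hB ⟨n - 1, by omega⟩ ∧
    (sortedEigenvalues hAB k = sortedEigenvalues hA k + sortedEigenvalues hB ⟨n - 1, by omega⟩ ↔
      ∃ x : Fin n → ℂ, x ≠ 0 ∧
        A *ᵥ x = (sortedEigenvalues hA k : ℂ) • x ∧
        B *ᵥ x = (sortedEigenvalues hB ⟨n - 1, by omega⟩ : ℂ) • x ∧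
        (A + B) *ᵥ x = (sortedEigenvalues hAB k : ℂ) • x) := by
  set top : Fin n := ⟨n - 1, by omega⟩
  obtain ⟨x, hx0, hxA, hxAB⟩ := exists_ne_zero_inner_eq_zero_of_gt_of_lt (𝕜 := ℂ)
    (by simp) hA.sortedEigenvectorBasis hAB.sortedEigenvectorBasis k
  have hxB : ∀ i, top < i → ⟪hB.sortedEigenvectorBasis i, x⟫_ℂ = 0 := fun i hi => by
    have := i.isLt; simp only [top, Fin.lt_def] at hi; omega
  have hsplit : RCLike.re ⟪x, toEuclideanLin (A + B) x⟫_ℂ =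
      RCLike.re ⟪x, toEuclideanLin A x⟫_ℂ + RCLike.re ⟪x, toEuclideanLin B x⟫_ℂ := by
    simp only [map_add, LinearMap.add_apply, inner_add_right]
  have hA_le := hA.re_inner_toEuclideanLin_le hxA
  have hB_le := hB.re_inner_toEuclideanLin_le hxB
  have hAB_ge := hAB.le_re_inner_toEuclideanLin hxAB
  have hx_pos : 0 < ‖x‖ ^ 2 := by positivity
  refine ⟨le_of_mul_le_mul_right (by linarith) hx_pos, ⟨fun heq => ?_, ?_⟩⟩
  · have hsum : sortedEigenvalues hAB k * ‖x‖ ^ 2 =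
        sortedEigenvalues hA k * ‖x‖ ^ 2 + sortedEigenvalues hB top * ‖x‖ ^ 2 := by
      rw [heq, add_mul]
    have hAx := hA.mulVec_eq_smul_of_re_inner_toEuclideanLin_eq hxA (by linarith)
    have hBx := hB.mulVec_eq_smul_of_re_inner_toEuclideanLin_eq hxB (by linarith)
    refine ⟨x.ofLp, by simpa using hx0, hAx, hBx, ?_⟩
    rw [add_mulVec, hAx, hBx, ← add_smul, heq, Complex.ofReal_add]
  · rintro ⟨y, hy0, hAy, hBy, hABy⟩
    exact_mod_cast eq_add_of_mulVec_eq_smul hy0 hAy hBy hABy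
end

section
/- Let G be a graph with smallest signless Laplacian eigenvalue μ, largest Laplacian eigenvalue λ, and minimum degree δ. Then μ ≥ 2δ − λ, with equality if and only if there is a nonzero vector x with Q(G)x = μx, L(G)x = λx, and D(G)x = δx simultaneously. -/
open Matrix SimpleGraph

/-!
Since `Q = 2D - L`, for every `x` we have
`xᵀQx = 2 xᵀ(D - δI)x + xᵀ(λI - L)x + (2δ - λ) xᵀx`, and both `D - δI` and `λI - L` are
positive semidefinite. Evaluating at a `μ`-eigenvector of `Q` gives `μ ≥ 2δ - λ`; equality
forces both quadratic forms to vanish, i.e. `Dx = δx` and `Lx = λx`. Conversely a common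
eigenvector turns `Q + L = 2D` into `μ + λ = 2δ`.
-/

namespace Matrix

variable {n : Type*} [Fintype n] [DecidableEq n]

theorem IsHermitian.posSemidef_smul_one_sub {M : Matrix n n ℝ} (hM : M.IsHermitian) {c : ℝ}
    (h : ∀ (ν : ℝ) (x : n → ℝ), x ≠ 0 → M *ᵥ x = ν • x → ν ≤ c) :
    (c • (1 : Matrix n n ℝ) - M).PosSemidef := by
  have hN : (c • (1 : Matrix n n ℝ) - M).IsHermitian :=
    (isHermitian_one.smul (IsSelfAdjoint.all c)).sub hM
  refine hN.posSemidef_iff_eigenvalues_nonneg.mpr fun i => ?_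
  set v : n → ℝ := ⇑(hN.eigenvectorBasis i)
  have hv : v ≠ 0 := by
    simpa [v] using hN.eigenvectorBasis.orthonormal.ne_zero i
  have hMv : M *ᵥ v = (c - hN.eigenvalues i) • v := by
    have := hN.mulVec_eigenvectorBasis i
    rw [sub_mulVec, smul_mulVec, one_mulVec] at this
    rw [sub_smul, ← this, sub_sub_cancel]
  simpa using h _ v hv hMv

end Matrix

namespace SimpleGraph

variable {V : Type*} [Fintype V] [DecidableEq V] (G : SimpleGraph V) [DecidableRel G.Adj]

theorem signlessLap_add_lapMatrix : signlessLap G + G.lapMatrix ℝ = (2 : ℝ) • G.degMatrix ℝ := by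
  rw [signlessLap, lapMatrix, two_smul]
  abel

theorem posSemidef_degMatrix_sub_minDegree :
    (G.degMatrix ℝ - (G.minDegree : ℝ) • (1 : Matrix V V ℝ)).PosSemidef := by
  rw [degMatrix, smul_one_eq_diagonal, diagonal_sub]
  exact PosSemidef.diagonal fun i => sub_nonneg.mpr (Nat.cast_le.mpr (G.minDegree_le_degree i))

theorem dotProduct_signlessLap_mulVec (δ c : ℝ) (x : V → ℝ) :
    x ⬝ᵥ (signlessLap G *ᵥ x) =
      2 * x ⬝ᵥ ((G.degMatrix ℝ - δ • 1) *ᵥ x) + x ⬝ᵥ ((c • 1 - G.lapMatrix ℝ) *ᵥ x)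
        + (2 * δ - c) * (x ⬝ᵥ x) := by
  rw [eq_sub_of_add_eq G.signlessLap_add_lapMatrix]
  simp only [sub_mulVec, smul_mulVec, one_mulVec, dotProduct_sub, dotProduct_smul, smul_eq_mul]
  ring

end SimpleGraph

theorem stmt10_general {V : Type*} [Fintype V] [DecidableEq V] (G : SimpleGraph V)
    [DecidableRel G.Adj] (μ lam : ℝ)
    (hμ : ∃ x : V → ℝ, x ≠ 0 ∧ signlessLap G *ᵥ x = μ • x)
    (hlammax : ∀ (ν : ℝ) (x : V → ℝ), x ≠ 0 → G.lapMatrix ℝ *ᵥ x = ν • x → ν ≤ lam) :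
    μ ≥ 2 * G.minDegree - lam ∧
      (μ = 2 * G.minDegree - lam ↔
        ∃ x : V → ℝ, x ≠ 0 ∧ signlessLap G *ᵥ x = μ • x ∧
          G.lapMatrix ℝ *ᵥ x = lam • x ∧
          G.degMatrix ℝ *ᵥ x = (G.minDegree : ℝ) • x) := by
  set δ : ℝ := (G.minDegree : ℝ)
  obtain ⟨x, hx0, hQx⟩ := hμ
  have hD := G.posSemidef_degMatrix_sub_minDegree
  have hL := (posSemidef_lapMatrix ℝ G).isHermitian.posSemidef_smul_one_sub hlammax
  have hDx := hD.dotProduct_mulVec_nonneg x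
  have hLx := hL.dotProduct_mulVec_nonneg x
  have hxx : 0 < x ⬝ᵥ x := by simpa using dotProduct_star_self_pos_iff.mpr hx0
  have hquad := G.dotProduct_signlessLap_mulVec δ lam x
  rw [hQx, dotProduct_smul, smul_eq_mul] at hquad
  rw [star_trivial] at hDx hLx
  refine ⟨by nlinarith, fun heq => ⟨x, hx0, hQx, ?_, ?_⟩, ?_⟩
  · have hLx0 := (hL.dotProduct_mulVec_zero_iff x).mp (by rw [star_trivial]; nlinarith)
    rw [sub_mulVec, smul_mulVec, one_mulVec, sub_eq_zero] at hLx0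
    exact hLx0.symm
  · have hDx0 := (hD.dotProduct_mulVec_zero_iff x).mp (by rw [star_trivial]; nlinarith)
    rwa [sub_mulVec, smul_mulVec, one_mulVec, sub_eq_zero] at hDx0
  · rintro ⟨y, hy0, hQy, hLy, hDy⟩
    have hQL := congrArg (· *ᵥ y) G.signlessLap_add_lapMatrix
    simp only [add_mulVec, smul_mulVec, hQy, hLy, hDy, smul_smul, ← add_smul] at hQL
    have hμlam : μ + lam = 2 * δ := smul_left_injective ℝ hy0 hQL
    linarith

/-- If `μ` is the smallest signless Laplacian eigenvalue, `λ` the largest Laplacian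
eigenvalue and `δ` the minimum degree of `G`, then `μ ≥ 2δ − λ`, with equality iff
there is a nonzero vector `x` with `Q(G)x = μx`, `L(G)x = λx` and `D(G)x = δx`. -/
theorem stmt10 {V : Type*} [Fintype V] [DecidableEq V] [Nonempty V] (G : SimpleGraph V)
    [DecidableRel G.Adj] (μ lam : ℝ)
    (hμ : ∃ x : V → ℝ, x ≠ 0 ∧ signlessLap G *ᵥ x = μ • x)
    (hμmin : ∀ (ν : ℝ) (x : V → ℝ), x ≠ 0 → signlessLap G *ᵥ x = ν • x → μ ≤ ν)
    (hlam : ∃ x : V → ℝ, x ≠ 0 ∧ G.lapMatrix ℝ *ᵥ x = lam • x)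
    (hlammax : ∀ (ν : ℝ) (x : V → ℝ), x ≠ 0 → G.lapMatrix ℝ *ᵥ x = ν • x → ν ≤ lam) :
    μ ≥ 2 * G.minDegree - lam ∧
      (μ = 2 * G.minDegree - lam ↔
        ∃ x : V → ℝ, x ≠ 0 ∧ signlessLap G *ᵥ x = μ • x ∧
          G.lapMatrix ℝ *ᵥ x = lam • x ∧
          G.degMatrix ℝ *ᵥ x = (G.minDegree : ℝ) • x) :=
  stmt10_general G μ lam hμ hlammax
end

section
/- Let A be an n×n strictly diagonally dominant matrix with inverse Ã = (ã_{ij}). Then for all j ≠ i, |ã_{ji}| ≤ (max over l ≠ i of |a_{li}| / (|a_{ll}| − Σ_{k ≠ l, k ≠ i} |a_{lk}|)) · |ã_{ii}|. -/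
/-!
Let `x` be the `i`-th column of `A⁻¹`, so `(A x)_l = 0` for every `l ≠ i`, and let `l ≠ i` be an
index at which `|x_l|` is maximal among the off-`i` entries. Row `l` of `A x = e_i` gives
`|a_{ll}| |x_l| ≤ |a_{li}| |x_i| + Σ_{k ≠ l, i} |a_{lk}| |x_l|`, and strict diagonal dominance of
row `l` makes `|a_{ll}| − Σ_{k ≠ l, i} |a_{lk}|` positive, so `|x_j| ≤ |x_l|` is bounded by the
`l`-th ratio times `|x_i|`.
-/

open Matrix Finset

namespace Matrix

variable {ι : Type*} [Fintype ι] [DecidableEq ι]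

theorem sub_sum_abs_mul_abs_le_of_mulVec_apply_eq_zero (A : Matrix ι ι ℝ) (x : ι → ℝ)
    {i l : ι} (hli : l ≠ i) (hx : (A *ᵥ x) l = 0) (hmax : ∀ k ≠ i, |x k| ≤ |x l|) :
    (|A l l| - ∑ k ∈ (univ.erase l).erase i, |A l k|) * |x l| ≤ |A l i| * |x i| := by
  have hrow : A l l * x l = -(A l i * x i + ∑ k ∈ (univ.erase l).erase i, A l k * x k) := by
    rw [← add_eq_zero_iff_eq_neg, ← hx, mulVec, dotProduct, ← add_sum_erase _ _ (mem_univ l),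
      ← add_sum_erase _ _ (mem_erase.2 ⟨hli.symm, mem_univ i⟩)]
  have hoff : ∑ k ∈ (univ.erase l).erase i, |A l k * x k| ≤
      ∑ k ∈ (univ.erase l).erase i, |A l k| * |x l| :=
    sum_le_sum fun k hk => by
      rw [abs_mul]
      exact mul_le_mul_of_nonneg_left (hmax k (ne_of_mem_erase hk)) (abs_nonneg _)
  have hdiag : |A l l| * |x l| ≤ |A l i| * |x i| + ∑ k ∈ (univ.erase l).erase i, |A l k| * |x l| :=
    calc |A l l| * |x l| = |A l i * x i + ∑ k ∈ (univ.erase l).erase i, A l k * x k| := by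
          rw [← abs_mul, hrow, abs_neg]
      _ ≤ |A l i * x i| + ∑ k ∈ (univ.erase l).erase i, |A l k * x k| :=
          (abs_add_le _ _).trans (by gcongr; exact abs_sum_le_sum_abs _ _)
      _ ≤ _ := by rw [abs_mul]; gcongr
  rw [sub_mul, sum_mul]
  linarith

theorem abs_le_iSup_mul_abs_of_mulVec_apply_eq_zero (A : Matrix ι ι ℝ)
    (hdd : ∀ l, ∑ k ∈ univ.erase l, |A l k| < |A l l|) (x : ι → ℝ) {i : ι}
    (hx : ∀ l ≠ i, (A *ᵥ x) l = 0) {j : ι} (hj : j ≠ i) :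
    |x j| ≤ (⨆ l : {l : ι // l ≠ i},
        |A l.1 i| / (|A l.1 l.1| - ∑ k ∈ (univ.erase l.1).erase i, |A l.1 k|)) * |x i| := by
  obtain ⟨l, hl, hmax⟩ := exists_max_image (univ.erase i) (fun k => |x k|)
    ⟨j, mem_erase.2 ⟨hj, mem_univ j⟩⟩
  have hli : l ≠ i := ne_of_mem_erase hl
  have hpos : 0 < |A l l| - ∑ k ∈ (univ.erase l).erase i, |A l k| :=
    sub_pos.2 <| (sum_le_sum_of_subset_of_nonneg (erase_subset _ _)
      fun k _ _ => abs_nonneg (A l k)).trans_lt (hdd l)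
  have hrow := sub_sum_abs_mul_abs_le_of_mulVec_apply_eq_zero A x hli (hx l hli)
    fun k hk => hmax k (mem_erase.2 ⟨hk, mem_univ k⟩)
  calc |x j| ≤ |x l| := hmax j (mem_erase.2 ⟨hj, mem_univ j⟩)
    _ ≤ |A l i| / (|A l l| - ∑ k ∈ (univ.erase l).erase i, |A l k|) * |x i| := by
        rwa [div_mul_eq_mul_div, le_div_iff₀ hpos, mul_comm]
    _ ≤ _ := by
        gcongr
        exact le_ciSup_of_le (Set.finite_range _).bddAbove ⟨l, hli⟩ le_rfl

end Matrix

theorem stmt18_general {n : ℕ} (A : Matrix (Fin n) (Fin n) ℝ)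
    (hdd : ∀ i : Fin n, ∑ j ∈ Finset.univ.erase i, |A i j| < |A i i|) :
    ∀ i j : Fin n, j ≠ i →
      |A⁻¹ j i| ≤
        (⨆ l : {l : Fin n // l ≠ i},
            |A l.1 i| /
              (|A l.1 l.1| - ∑ k ∈ (Finset.univ.erase l.1).erase i, |A l.1 k|)) *
          |A⁻¹ i i| := by
  intro i j hj
  have hdet : IsUnit A.det :=
    (det_ne_zero_of_sum_row_lt_diag (by simpa only [Real.norm_eq_abs] using hdd)).isUnit
  refine abs_le_iSup_mul_abs_of_mulVec_apply_eq_zero A hdd (fun k => A⁻¹ k i) (fun l hl => ?_) hj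
  have hcol := congrFun (congrFun (mul_nonsing_inv A hdet) l) i
  rwa [mul_apply, one_apply_ne hl] at hcol

/-- Quantified inheritance of diagonal dominance by the inverse (Li–Huang–Shen–Li):
if `A` is strictly diagonally dominant with inverse `Ã`, then for all `j ≠ i`,
`|ã_{ji}| ≤ (max_{l ≠ i} |a_{li}| / (|a_{ll}| − Σ_{k ≠ l, i} |a_{lk}|)) · |ã_{ii}|`. -/
theorem stmt18 {n : ℕ} (hn : 1 < n) (A : Matrix (Fin n) (Fin n) ℝ)
    (hdd : ∀ i : Fin n, ∑ j ∈ Finset.univ.erase i, |A i j| < |A i i|) :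
    ∀ i j : Fin n, j ≠ i →
      |A⁻¹ j i| ≤
        (⨆ l : {l : Fin n // l ≠ i},
            |A l.1 i| /
              (|A l.1 l.1| - ∑ k ∈ (Finset.univ.erase l.1).erase i, |A l.1 k|)) *
          |A⁻¹ i i| :=
  stmt18_general A hdd
end
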